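/- Let n, d ≥ 1 and u : 2^[n] × 2^[d] → ℝ. Define ψ_{ij} by the 2D-Shapley formula ψ_{ij} = (1/(nd)) Σ_{k=1}^n Σ_{l=1}^d [C(n−1,k−1)C(d−1,l−1)]^{-1} Σ_{(S,F)} M_u^{i,j}(S,F), where the inner sum is over S ⊆ [n]\{i} with |S| = k−1 and F ⊆ [d]\{j} with |F| = l−1, and M_u^{i,j}(S,F) = u(S∪{i},F∪{j}) + u(S,F) − u(S∪{i},F) − u(S,F∪{j}). Then Σ_{i=1}^n Σ_{j=1}^d ψ_{ij} = u([n],[d]) − u([n],∅) − u(∅,[d]) + u(∅,∅). -/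

import Mathlib

/-!
The 2D-Shapley value is the row Shapley value of the column Shapley value of `u`, so
2D-efficiency is 1D-efficiency applied twice. For 1D-efficiency, double counting turns the
size-`k` marginal contributions, with the Shapley weight, into `e (k + 1) - e k`, where `e j` is
the average of `v` over the `j`-element coalitions; the sum over `k < n` telescopes to
`e n - e 0 = v univ - v ∅`.
-/

/-- The mixed second-order difference of a 2D utility. -/
def Mdiff {n d : ℕ} (u : Finset (Fin n) → Finset (Fin d) → ℝ)
    (i : Fin n) (j : Fin d) (S : Finset (Fin n)) (F : Finset (Fin d)) : ℝ :=
  u (insert i S) (insert j F) + u S F - u (insert i S) F - u S (insert j F)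

/-- The 2D-Shapley value of cell (i,j). -/
noncomputable def psi2DShap {n d : ℕ} (u : Finset (Fin n) → Finset (Fin d) → ℝ)
    (i : Fin n) (j : Fin d) : ℝ :=
  (1 / ((n : ℝ) * d)) *
    ∑ k ∈ Finset.Icc 1 n, ∑ l ∈ Finset.Icc 1 d,
      (1 / (((n - 1).choose (k - 1) : ℝ) * ((d - 1).choose (l - 1) : ℝ))) *
        ∑ S ∈ (Finset.univ.erase i).powersetCard (k - 1),
          ∑ F ∈ (Finset.univ.erase j).powersetCard (l - 1),
            Mdiff u i j S F

open Finset

namespace Nat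

theorem succ_div_mul_choose_pred {N k : ℕ} (hk : k < N) :
    ((k + 1 : ℕ) : ℝ) / (N * (N - 1).choose k) = 1 / N.choose (k + 1) := by
  obtain ⟨m, rfl⟩ : ∃ m, N = m + 1 := ⟨N - 1, by omega⟩
  have hchoose : ((m.choose k : ℕ) : ℝ) ≠ 0 := by
    exact_mod_cast (Nat.choose_pos (by omega)).ne'
  have hchoose' : (((m + 1).choose (k + 1) : ℕ) : ℝ) ≠ 0 := by
    exact_mod_cast (Nat.choose_pos (by omega)).ne'
  have h : (((m + 1) * m.choose k : ℕ) : ℝ) = ((m + 1).choose (k + 1) * (k + 1) : ℕ) :=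
    congrArg _ (Nat.add_one_mul_choose_eq m k)
  rw [Nat.add_sub_cancel, div_eq_div_iff (by positivity) hchoose']
  push_cast at h ⊢
  linear_combination -h

theorem sub_div_mul_choose_pred {N k : ℕ} (hk : k < N) :
    ((N - k : ℕ) : ℝ) / (N * (N - 1).choose k) = 1 / N.choose k := by
  obtain ⟨m, rfl⟩ : ∃ m, N = m + 1 := ⟨N - 1, by omega⟩
  have hchoose : ((m.choose k : ℕ) : ℝ) ≠ 0 := by
    exact_mod_cast (Nat.choose_pos (by omega)).ne'
  have hchoose' : (((m + 1).choose k : ℕ) : ℝ) ≠ 0 := by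
    exact_mod_cast (Nat.choose_pos (by omega)).ne'
  have h : ((m.choose k * (m + 1) : ℕ) : ℝ) = ((m + 1).choose k * (m + 1 - k) : ℕ) :=
    congrArg _ (Nat.choose_mul_succ_eq m k)
  rw [Nat.add_sub_cancel, div_eq_div_iff (by positivity) hchoose']
  push_cast at h ⊢
  linear_combination -h

end Nat

section Shapley

variable {α : Type*} [Fintype α] [DecidableEq α]

noncomputable def shapley (v : Finset α → ℝ) (i : α) : ℝ :=
  (1 / (Fintype.card α : ℝ)) * ∑ k ∈ Icc 1 (Fintype.card α),
    (1 / ((Fintype.card α - 1).choose (k - 1) : ℝ)) *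
      ∑ S ∈ (univ.erase i).powersetCard (k - 1), (v (insert i S) - v S)

theorem shapley_finset_sum {ι : Type*} (t : Finset ι) (w : ι → Finset α → ℝ) (i : α) :
    shapley (fun S => ∑ j ∈ t, w j S) i = ∑ j ∈ t, shapley (w j) i := by
  simp only [shapley, ← sum_sub_distrib, mul_sum]
  exact (sum_congr rfl fun k _ => sum_comm).trans sum_comm

theorem sum_sum_powersetCard_erase_insert (k : ℕ) (v : Finset α → ℝ) :
    ∑ i, ∑ S ∈ (univ.erase i).powersetCard k, v (insert i S) =
      ((k + 1 : ℕ) : ℝ) * ∑ T ∈ univ.powersetCard (k + 1), v T := by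
  have hcount : ((k + 1 : ℕ) : ℝ) * ∑ T ∈ univ.powersetCard (k + 1), v T =
      ∑ T ∈ univ.powersetCard (k + 1), ∑ _i ∈ T, v T := by
    rw [mul_sum]
    refine sum_congr rfl fun T hT => ?_
    rw [sum_const, nsmul_eq_mul, (mem_powersetCard.1 hT).2]
  rw [hcount, sum_sigma', sum_sigma']
  refine sum_nbij' (fun p => ⟨insert p.1 p.2, p.1⟩) (fun q => ⟨q.2, q.1.erase q.2⟩)
    ?_ ?_ ?_ ?_ fun _ _ => rfl
  · rintro ⟨i, S⟩ hp
    simp only [mem_sigma, mem_univ, mem_powersetCard, subset_erase, subset_univ,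
      true_and] at hp ⊢
    exact ⟨by rw [card_insert_of_notMem hp.1, hp.2], mem_insert_self _ _⟩
  · rintro ⟨T, i⟩ hq
    simp only [mem_sigma, mem_univ, mem_powersetCard, subset_erase, subset_univ,
      true_and] at hq ⊢
    exact ⟨notMem_erase _ _, by rw [card_erase_of_mem hq.2, hq.1, Nat.add_sub_cancel]⟩
  · rintro ⟨i, S⟩ hp
    simp only [mem_sigma, mem_powersetCard, subset_erase] at hp
    simp [erase_insert hp.2.1.2]
  · rintro ⟨T, i⟩ hq
    simp only [mem_sigma] at hq
    simp [insert_erase hq.2]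

theorem sum_sum_powersetCard_erase (k : ℕ) (v : Finset α → ℝ) :
    ∑ i, ∑ S ∈ (univ.erase i).powersetCard k, v S =
      ((Fintype.card α - k : ℕ) : ℝ) * ∑ S ∈ univ.powersetCard k, v S := by
  rw [sum_comm' (t' := univ.powersetCard k) (s' := fun S => Sᶜ) fun i S => by
    simp only [mem_univ, true_and, mem_powersetCard, mem_compl, subset_erase, subset_univ]]
  rw [mul_sum]
  refine sum_congr rfl fun S hS => ?_
  rw [sum_const, nsmul_eq_mul, card_compl, (mem_powersetCard.1 hS).2]

theorem sum_shapley (v : Finset α → ℝ) : ∑ i, shapley v i = v univ - v ∅ := by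
  set N := Fintype.card α
  set e : ℕ → ℝ := fun j => 1 / (N.choose j : ℝ) * ∑ T ∈ univ.powersetCard j, v T
  have hlayer : ∀ k ∈ range N, ∑ i, 1 / (N : ℝ) * (1 / ((N - 1).choose k : ℝ) *
      ∑ S ∈ (univ.erase i).powersetCard k, (v (insert i S) - v S)) = e (k + 1) - e k := by
    intro k hk
    have hkN : k < N := mem_range.1 hk
    simp only [← mul_sum, sum_sub_distrib, sum_sum_powersetCard_erase_insert,
      sum_sum_powersetCard_erase, e, ← Nat.succ_div_mul_choose_pred hkN,
      ← Nat.sub_div_mul_choose_pred hkN]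
    ring
  calc ∑ i, shapley v i
      = ∑ k ∈ range N, ∑ i, 1 / (N : ℝ) * (1 / ((N - 1).choose k : ℝ) *
          ∑ S ∈ (univ.erase i).powersetCard k, (v (insert i S) - v S)) := by
        simp only [shapley, mul_sum]
        rw [sum_comm, ← Nat.Ico_zero_eq_range, ← Ico_add_one_right_eq_Icc,
          ← sum_Ico_add' _ 0 N 1]
        simp [N]
    _ = e N - e 0 := by rw [sum_congr rfl hlayer, sum_range_sub]
    _ = v univ - v ∅ := by
        simp [e, N, ← card_univ, powersetCard_self]

end Shapley

theorem psi2DShap_eq_shapley_shapley {n d : ℕ} (u : Finset (Fin n) → Finset (Fin d) → ℝ)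
    (i : Fin n) (j : Fin d) : psi2DShap u i j = shapley (fun S => shapley (u S) j) i := by
  simp only [psi2DShap, shapley, Mdiff, Fintype.card_fin, ← mul_sub, ← sum_sub_distrib, mul_sum]
  refine sum_congr rfl fun k _ => ?_
  rw [sum_comm]
  refine sum_congr rfl fun l _ => sum_congr rfl fun S _ => sum_congr rfl fun F _ => ?_
  ring

theorem stmt_11_general (n d : ℕ)
    (u : Finset (Fin n) → Finset (Fin d) → ℝ) :
    ∑ i, ∑ j, psi2DShap u i j =
      u Finset.univ Finset.univ - u Finset.univ ∅ - u ∅ Finset.univ + u ∅ ∅ := by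
  calc ∑ i, ∑ j, psi2DShap u i j
      = ∑ i, shapley (fun S => ∑ j, shapley (u S) j) i := by
        simp only [psi2DShap_eq_shapley_shapley, shapley_finset_sum]
    _ = ∑ i, shapley (fun S => u S univ - u S ∅) i := by simp only [sum_shapley]
    _ = (u univ univ - u univ ∅) - (u ∅ univ - u ∅ ∅) := sum_shapley _
    _ = u univ univ - u univ ∅ - u ∅ univ + u ∅ ∅ := by ring

/-- 2D-efficiency of 2D-Shapley. -/
theorem stmt_11 (n d : ℕ) (hn : 1 ≤ n) (hd : 1 ≤ d)
    (u : Finset (Fin n) → Finset (Fin d) → ℝ) :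
    ∑ i, ∑ j, psi2DShap u i j =
      u Finset.univ Finset.univ - u Finset.univ ∅ - u ∅ Finset.univ + u ∅ ∅ :=
  stmt_11_general n d u
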